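/- arXiv:1609.05776 — 3 statements merged into one kernel-verified Lean document; each statement's English description precedes it below -/
import Mathlib

section
/- (Lebesgue) Let p be a prime with p ≡ 7 (mod 8). Then the sum of the quadratic residues of p lying in [1, (p−1)/2] equals the sum of the non-residues of p lying in [1, (p−1)/2], i.e. ΣR_b = ΣN_b. -/
/-!
Let `χ` be the quadratic character of `p` and `m = (p - 1) / 2`. Since `p ≡ 7 (mod 8)`,
`χ 2 = 1` and `χ (-1) = -1`, and the claim amounts to `∑_{y=1}^{m} χ(y) y = 0`. The map sending
`y` to `2y` if `2y ≤ m` and to `p - 2y` otherwise permutes `[1, m]`, and `χ` is multiplied by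
`+1`, resp. `-1`, along it. Reindexing `∑ χ(y)` along this permutation shows that `χ` sums to
zero over the `y` with `m < 2y`; reindexing `∑ χ(y) y` then shows that this sum equals twice
itself.
-/

open Finset

theorem Finset.sum_Icc_eq_sum_two_mul_add_sum_sub_two_mul {M : Type*} [AddCommMonoid M]
    (m : ℤ) (f : ℤ → M) :
    ∑ z ∈ Icc 1 m, f z =
      ∑ y ∈ Icc 1 m with 2 * y ≤ m, f (2 * y) +
        ∑ y ∈ Icc 1 m with ¬ 2 * y ≤ m, f (2 * m + 1 - 2 * y) := by
  rw [← sum_ite]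
  symm
  refine sum_nbij' (fun y => if 2 * y ≤ m then 2 * y else 2 * m + 1 - 2 * y)
    (fun z => if z % 2 = 0 then z / 2 else (2 * m + 1 - z) / 2) ?_ ?_ ?_ ?_
    fun _ _ => (apply_ite f _ _ _).symm
  all_goals
    intro y hy
    simp only [mem_Icc] at hy ⊢
    split_ifs <;> omega

namespace MulChar

variable {R : Type*} [CommRing R] {n m : ℕ} (χ : MulChar (ZMod n) R)

theorem apply_two_mul (h2 : χ 2 = 1) (y : ℤ) : χ ((2 * y : ℤ) : ZMod n) = χ y := by
  rw [Int.cast_mul, Int.cast_ofNat, map_mul, h2, one_mul]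

theorem apply_two_mul_add_one_sub_two_mul (hn : n = 2 * m + 1) (h2 : χ 2 = 1)
    (hneg : χ (-1) = -1) (y : ℤ) :
    χ ((2 * m + 1 - 2 * y : ℤ) : ZMod n) = -χ y := by
  have hn0 : ((2 * m + 1 : ℤ) : ZMod n) = 0 := by
    rw [ZMod.intCast_zmod_eq_zero_iff_dvd, hn]; push_cast; rfl
  rw [Int.cast_sub, hn0, zero_sub, ← neg_one_mul, map_mul, apply_two_mul χ h2, hneg, neg_one_mul]

theorem sum_Icc_filter_not_two_mul_le_eq_zero [IsAddTorsionFree R] (hn : n = 2 * m + 1)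
    (h2 : χ 2 = 1) (hneg : χ (-1) = -1) :
    ∑ y ∈ Icc (1 : ℤ) m with ¬ 2 * y ≤ (m : ℤ), χ y = 0 := by
  have hsplit := sum_filter_add_sum_filter_not (Icc (1 : ℤ) m) (2 * · ≤ (m : ℤ)) (χ ·)
  rw [sum_Icc_eq_sum_two_mul_add_sum_sub_two_mul,
    sum_congr rfl fun y _ => apply_two_mul χ h2 y,
    sum_congr rfl fun y _ => apply_two_mul_add_one_sub_two_mul χ hn h2 hneg y,
    sum_neg_distrib] at hsplit
  rw [← two_nsmul_eq_zero, two_nsmul]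
  linear_combination hsplit

theorem sum_Icc_mul_eq_zero [IsAddTorsionFree R] (hn : n = 2 * m + 1) (h2 : χ 2 = 1)
    (hneg : χ (-1) = -1) : ∑ y ∈ Icc (1 : ℤ) m, χ y * y = 0 := by
  have hdouble : ∑ y ∈ Icc (1 : ℤ) m with 2 * y ≤ (m : ℤ),
      χ ((2 * y : ℤ) : ZMod n) * (2 * y : ℤ)
      = 2 * ∑ y ∈ Icc (1 : ℤ) m with 2 * y ≤ (m : ℤ), χ y * y := by
    rw [mul_sum]
    refine sum_congr rfl fun y _ => ?_
    rw [apply_two_mul χ h2]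
    push_cast
    ring
  have hreflect : ∑ y ∈ Icc (1 : ℤ) m with ¬ 2 * y ≤ (m : ℤ),
      χ ((2 * m + 1 - 2 * y : ℤ) : ZMod n) * (2 * m + 1 - 2 * y : ℤ)
      = 2 * ∑ y ∈ Icc (1 : ℤ) m with ¬ 2 * y ≤ (m : ℤ), χ y * y
        - (2 * m + 1) * ∑ y ∈ Icc (1 : ℤ) m with ¬ 2 * y ≤ (m : ℤ), χ y := by
    rw [mul_sum, mul_sum, ← sum_sub_distrib]
    refine sum_congr rfl fun y _ => ?_
    rw [apply_two_mul_add_one_sub_two_mul χ hn h2 hneg]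
    push_cast
    ring
  have hsum := sum_Icc_eq_sum_two_mul_add_sum_sub_two_mul m (fun y => χ y * y)
  rw [hdouble, hreflect, sum_Icc_filter_not_two_mul_le_eq_zero χ hn h2 hneg] at hsum
  rw [← sum_filter_add_sum_filter_not (Icc (1 : ℤ) m) (2 * · ≤ (m : ℤ))] at hsum ⊢
  linear_combination -hsum

end MulChar

-- The coercion `Finset ℕ → Finset ℤ` on the left is the image under the (classical) `Finset`
-- monad; it is how the index set of the main statement elaborates.
open scoped Classical in
theorem Finset.natCast_Icc_eq_int_Icc (a b : ℕ) :
    ((↑(Icc a b : Finset ℕ)) : Finset ℤ) = Icc (a : ℤ) b := by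
  ext z
  simpa using Set.ext_iff.mp (Nat.image_cast_int_Icc a b) z

theorem Int.exists_sq_modEq_iff_isSquare (n : ℕ) (a : ℤ) :
    (∃ x : ℤ, x ^ 2 ≡ a [ZMOD n]) ↔ IsSquare (a : ZMod n) := by
  constructor
  · rintro ⟨x, hx⟩
    refine ⟨x, ?_⟩
    rw [← (ZMod.intCast_eq_intCast_iff _ _ _).mpr hx]
    push_cast
    ring
  · rintro ⟨r, hr⟩
    obtain ⟨x, rfl⟩ := ZMod.intCast_surjective r
    refine ⟨x, (ZMod.intCast_eq_intCast_iff _ _ _).mp ?_⟩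
    push_cast
    rw [hr, sq]

theorem quadraticChar_mul_eq_ite {F : Type*} [Field F] [Fintype F] [DecidableEq F] {a : F}
    (ha : a ≠ 0) (x : ℤ) [Decidable (IsSquare a)] :
    quadraticChar F a * x = if IsSquare a then x else -x := by
  split_ifs with h
  · rw [(quadraticChar_one_iff_isSquare ha).mpr h, one_mul]
  · rw [quadraticChar_neg_one_iff_not_isSquare.mpr h, neg_one_mul]

open scoped Classical in
theorem sum_Icc_quadraticChar_mul_eq_sub {p m : ℕ} [Fact p.Prime] (hm : m < p) :
    ∑ y ∈ Icc (1 : ℤ) m, quadraticChar (ZMod p) y * y =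
      ∑ y ∈ Icc (1 : ℤ) m with ∃ x : ℤ, x ^ 2 ≡ y [ZMOD p], y -
        ∑ y ∈ Icc (1 : ℤ) m with ¬ ∃ x : ℤ, x ^ 2 ≡ y [ZMOD p], y := by
  rw [sub_eq_add_neg, ← sum_neg_distrib, ← sum_ite]
  refine sum_congr rfl fun y hy => ?_
  rw [mem_Icc] at hy
  have hy0 : (y : ZMod p) ≠ 0 := fun h0 => by
    have := Int.eq_zero_of_dvd_of_nonneg_of_lt (by omega) (by omega)
      ((ZMod.intCast_zmod_eq_zero_iff_dvd y p).mp h0)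
    omega
  simp_rw [quadraticChar_mul_eq_ite hy0, Int.exists_sq_modEq_iff_isSquare]

open scoped Classical in
/-- (Lebesgue) For a prime `p ≡ 7 (mod 8)`, the sum of the quadratic residues of `p`
in `[1, (p-1)/2]` equals the sum of the non-residues of `p` in `[1, (p-1)/2]`. -/
theorem sum_small_residues_eq_sum_small_nonresidues_of_prime_mod_eight_eq_seven
    (p : ℕ) (hp : p.Prime) (hmod : p % 8 = 7) :
    ∑ y ∈ (Finset.Icc 1 ((p - 1) / 2)).filter
        (fun y => ∃ x : ℤ, x ^ 2 ≡ (y : ℤ) [ZMOD (p : ℤ)]), y =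
      ∑ y ∈ (Finset.Icc 1 ((p - 1) / 2)).filter
        (fun y => ¬ ∃ x : ℤ, x ^ 2 ≡ (y : ℤ) [ZMOD (p : ℤ)]), y := by
  have := Fact.mk hp
  have hchar : ringChar (ZMod p) ≠ 2 := by rw [ZMod.ringChar_zmod_n]; omega
  have h2 : quadraticChar (ZMod p) 2 = 1 := by
    rw [quadraticChar_two hchar, ZMod.card, ZMod.χ₈_nat_eq_if_mod_eight, if_neg (by omega),
      if_pos (by omega)]
  have hneg : quadraticChar (ZMod p) (-1) = -1 := by
    rw [quadraticChar_neg_one hchar, ZMod.card, ZMod.χ₄_nat_eq_if_mod_four, if_neg (by omega),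
      if_neg (by omega)]
  have hsum := (quadraticChar (ZMod p)).sum_Icc_mul_eq_zero (by omega : p = 2 * ((p - 1) / 2) + 1)
    h2 hneg
  simp only [Int.cast_id] at hsum
  rw [sum_Icc_quadraticChar_mul_eq_sub (by omega), sub_eq_zero] at hsum
  rwa [Finset.natCast_Icc_eq_int_Icc]
end

section
/- (Lebesgue) Let p be a prime with p ≡ 3 (mod 8). Then 3·(ΣN − ΣR) = p·(R_b(p) − N_b(p)), where ΣR and ΣN are the sums of all quadratic residues and non-residues of p in [1, p−1], and R_b(p), N_b(p) count the residues and non-residues in [1, (p−1)/2]. -/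
/-!
Let `χ` be the Legendre symbol, `n = (p - 1) / 2`, `S = ∑_{y ≤ n} χ(y) y`, `D = ∑_{y ≤ n} χ(y)`
and `T = ∑_{y < p} χ(y) y = ΣR - ΣN`. For `p ≡ 3 (mod 8)` both `χ(-1)` and `χ(2)` are `-1`.
Folding `[1, p - 1]` at its midpoint by `y ↦ p - y` gives `T = 2S - pD`; splitting it instead
into the even numbers `2z` and the odd numbers `p - 2z` (`1 ≤ z ≤ n`) gives `T = pD - 4S`.
Eliminating `S` yields `3T = -pD`, and `D = R_b - N_b`.
-/

open Finset

section Folding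

variable {M : Type*} [AddCommMonoid M]

theorem Int.sum_Icc_two_mul_eq_sum_add_reflect (n : ℤ) (g : ℤ → M) :
    ∑ y ∈ Icc 1 (2 * n), g y = ∑ y ∈ Icc 1 n, (g y + g (2 * n + 1 - y)) := by
  rw [sum_add_distrib, ← sum_filter_add_sum_filter_not (Icc 1 (2 * n)) (· ≤ n)]
  congr 1
  · congr 1
    ext y
    simp only [mem_filter, mem_Icc]
    omega
  · refine sum_nbij' (2 * n + 1 - ·) (2 * n + 1 - ·) ?_ ?_ ?_ ?_ fun y _ => congrArg g ?_ <;>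
      simp only [mem_filter, mem_Icc] at * <;> omega

theorem Int.sum_Icc_two_mul_eq_sum_double_add_reflect (n : ℤ) (g : ℤ → M) :
    ∑ y ∈ Icc 1 (2 * n), g y = ∑ z ∈ Icc 1 n, (g (2 * z) + g (2 * n + 1 - 2 * z)) := by
  rw [sum_add_distrib, ← sum_filter_add_sum_filter_not (Icc 1 (2 * n)) (· % 2 = 0)]
  congr 1
  · refine sum_nbij' (· / 2) (2 * ·) ?_ ?_ ?_ ?_ fun y _ => congrArg g ?_ <;>
      simp only [mem_filter, mem_Icc] at * <;> omega
  · refine sum_nbij' (fun y => (2 * n + 1 - y) / 2) (2 * n + 1 - 2 * ·) ?_ ?_ ?_ ?_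
      fun y _ => congrArg g ?_ <;> simp only [mem_filter, mem_Icc] at * <;> omega

end Folding

theorem Int.three_mul_sum_Icc_mul_self_of_reflect_of_double (p n : ℤ) (hpn : p = 2 * n + 1)
    (f : ℤ → ℤ) (hreflect : ∀ y, f (p - y) = -f y) (hdouble : ∀ y, f (2 * y) = -f y) :
    3 * ∑ y ∈ Icc 1 (2 * n), f y * y = -(p * ∑ y ∈ Icc 1 n, f y) := by
  subst hpn
  have hpairs : ∑ y ∈ Icc 1 (2 * n), f y * y =
      2 * ∑ y ∈ Icc 1 n, f y * y - (2 * n + 1) * ∑ y ∈ Icc 1 n, f y := by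
    rw [Int.sum_Icc_two_mul_eq_sum_add_reflect, mul_sum, mul_sum, ← sum_sub_distrib]
    refine sum_congr rfl fun y _ => ?_
    rw [hreflect]
    ring
  have hdoubles : ∑ y ∈ Icc 1 (2 * n), f y * y =
      (2 * n + 1) * ∑ y ∈ Icc 1 n, f y - 4 * ∑ y ∈ Icc 1 n, f y * y := by
    rw [Int.sum_Icc_two_mul_eq_sum_double_add_reflect, mul_sum, mul_sum, ← sum_sub_distrib]
    refine sum_congr rfl fun y _ => ?_
    rw [hreflect, hdouble]
    ring
  linear_combination 2 * hpairs + hdoubles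

theorem ZMod.isSquare_intCast_iff_exists_sq_modEq (n : ℕ) (a : ℤ) :
    IsSquare (a : ZMod n) ↔ ∃ x : ℤ, x ^ 2 ≡ a [ZMOD n] := by
  simp only [← ZMod.intCast_eq_intCast_iff]
  constructor
  · rintro ⟨r, hr⟩
    obtain ⟨x, rfl⟩ := ZMod.intCast_surjective r
    exact ⟨x, by push_cast; rw [hr, sq]⟩
  · rintro ⟨x, hx⟩
    exact ⟨x, by rw [← hx]; push_cast; ring⟩

theorem Finset.sum_ite_one_neg_one_mul {α R : Type*} [CommRing R] (s : Finset α) (P : α → Prop)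
    [DecidablePred P] (g : α → R) :
    ∑ y ∈ s, (if P y then 1 else -1) * g y = ∑ y ∈ s with P y, g y - ∑ y ∈ s with ¬P y, g y := by
  simp [ite_mul, sum_ite, sub_eq_add_neg]

open scoped Classical in
theorem Finset.bind_pure_natCast_Icc (a b : ℕ) :
    (do let y ← Icc a b; pure (y : ℤ)) = Icc (a : ℤ) b := by
  ext y
  simp only [pure_def, bind_def, sup_singleton_apply, mem_image, mem_Icc]
  constructor
  · rintro ⟨k, hk, rfl⟩
    omega
  · exact fun hy => ⟨y.toNat, by omega, by omega⟩

namespace legendreSym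

variable (p : ℕ) [Fact p.Prime]

open scoped Classical in
theorem eq_ite_exists_sq_modEq {a : ℤ} (ha : (a : ZMod p) ≠ 0) :
    legendreSym p a = if ∃ x : ℤ, x ^ 2 ≡ a [ZMOD p] then 1 else -1 := by
  rw [← ZMod.isSquare_intCast_iff_exists_sq_modEq]
  split_ifs with h
  · exact (eq_one_iff p ha).mpr h
  · exact (eq_neg_one_iff p).mpr h

open scoped Classical in
theorem sum_Icc_mul_eq_sum_filter_sub_sum_filter {m : ℤ} (hm : m < p) (g : ℤ → ℤ) :
    ∑ y ∈ Icc 1 m, legendreSym p y * g y =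
      ∑ y ∈ Icc 1 m with ∃ x : ℤ, x ^ 2 ≡ y [ZMOD p], g y -
        ∑ y ∈ Icc 1 m with ¬∃ x : ℤ, x ^ 2 ≡ y [ZMOD p], g y := by
  rw [← sum_ite_one_neg_one_mul]
  refine sum_congr rfl fun y hy => ?_
  rw [mem_Icc] at hy
  rw [eq_ite_exists_sq_modEq p fun h => ?_]
  have := Int.le_of_dvd (by omega) ((ZMod.intCast_zmod_eq_zero_iff_dvd y p).mp h)
  omega

theorem at_prime_sub_of_mod_four_eq_three (hp : p % 4 = 3) (a : ℤ) :
    legendreSym p (p - a) = -legendreSym p a := by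
  have hcast : legendreSym p (p - a) = legendreSym p (-a) := by
    unfold legendreSym
    push_cast
    rw [ZMod.natCast_self, zero_sub]
  rw [hcast, at_neg (by omega), ZMod.χ₄_nat_three_mod_four hp, neg_one_mul]

theorem at_two_mul_of_mod_eight_eq_three_or_five (hp : p % 8 = 3 ∨ p % 8 = 5) (a : ℤ) :
    legendreSym p (2 * a) = -legendreSym p a := by
  rw [legendreSym.mul, (eq_neg_one_iff p).mpr, neg_one_mul]
  rw [Int.cast_ofNat, ZMod.exists_sq_eq_two_iff (by omega)]
  omega

end legendreSym

open scoped Classical in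
/-- (Lebesgue) For a prime `p ≡ 3 (mod 8)`:
`3·(ΣN − ΣR) = p·(R_b(p) − N_b(p))`, where `ΣR`, `ΣN` are the sums of all residues /
non-residues in `[1, p-1]`, and `R_b`, `N_b` count residues / non-residues in
`[1, (p-1)/2]`. -/
theorem three_mul_sum_diff_eq_of_prime_mod_eight_eq_three
    (p : ℕ) (hp : p.Prime) (hmod : p % 8 = 3) :
    3 * ((∑ y ∈ (Finset.Icc 1 (p - 1)).filter
        (fun y => ¬ ∃ x : ℤ, x ^ 2 ≡ (y : ℤ) [ZMOD (p : ℤ)]), (y : ℤ)) -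
      (∑ y ∈ (Finset.Icc 1 (p - 1)).filter
        (fun y => ∃ x : ℤ, x ^ 2 ≡ (y : ℤ) [ZMOD (p : ℤ)]), (y : ℤ))) =
    (p : ℤ) *
      ((((Finset.Icc 1 ((p - 1) / 2)).filter
          (fun y => ∃ x : ℤ, x ^ 2 ≡ (y : ℤ) [ZMOD (p : ℤ)])).card : ℤ) -
        (((Finset.Icc 1 ((p - 1) / 2)).filter
          (fun y => ¬ ∃ x : ℤ, x ^ 2 ≡ (y : ℤ) [ZMOD (p : ℤ)])).card : ℤ)) := by
  have := Fact.mk hp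
  set n : ℤ := (((p - 1) / 2 : ℕ) : ℤ)
  have hpn : (p : ℤ) = 2 * n + 1 := by omega
  -- The sums and counts of the statement run over the `Finset`-monad image of `Icc` in `ℤ`.
  rw [bind_pure_natCast_Icc, bind_pure_natCast_Icc, Nat.cast_one,
    show ((p - 1 : ℕ) : ℤ) = 2 * n by omega]
  have hsum := legendreSym.sum_Icc_mul_eq_sum_filter_sub_sum_filter p
    (m := 2 * n) (by omega) (fun y => y)
  have hcard := legendreSym.sum_Icc_mul_eq_sum_filter_sub_sum_filter p
    (m := n) (by omega) (fun _ => 1)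
  simp only [mul_one, ← cast_card] at hcard
  have hkey := Int.three_mul_sum_Icc_mul_self_of_reflect_of_double p n hpn (legendreSym p)
    (legendreSym.at_prime_sub_of_mod_four_eq_three p (by omega))
    (legendreSym.at_two_mul_of_mod_eight_eq_three_or_five p (by omega))
  rw [← hcard]
  linear_combination -hkey + 3 * hsum
end

section
/- Let p be a prime with p ≡ 3 (mod 4) and p ≥ 7, and let k ≥ 2. Then the number of quadratic residues modulo p^k lying in [1, (p^k−1)/2] is strictly less than (p^k − 1)/4, i.e. 4·R_b(p^k) < p^k − 1. -/
/-!
If `x² ≡ y (mod p^k)` and `p ∣ y`, then `p ∣ x`, so `p² ∣ y` because `k ≥ 2`; otherwise `y` is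
a nonzero square mod `p`. Nonzero squares mod `p` fill at most `(p - 1)/2` residues of every block
of `p` consecutive integers, and strictly fewer than `(p - 1)/2` of `1, …, (p - 1)/2`, because
`-1` is not a square when `p ≡ 3 (mod 4)`. Writing `(p^k - 1)/2 = p q + (p - 1)/2`, the residues
in `[1, (p^k - 1)/2]` number less than `q (p - 1)/2 + (p - 1)/2 + (p^(k-2) - 1)/2`, which is at
most `(p^k - 1)/4`.
-/

open Finset

section

open scoped Classical

-- Filtering `Finset.Icc 1 N : Finset ℕ` by a predicate on `ℤ` elaborates to this monadic lift.
theorem Finset.card_filter_bind_pure_natCast (s : Finset ℕ) (P : ℤ → Prop) [DecidablePred P] :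
    #((s >>= fun a => pure (a : ℤ)).filter P) = #(s.filter fun a : ℕ => P (a : ℤ)) := by
  have : (s >>= fun a => pure (a : ℤ)) = s.map Nat.castEmbedding := by ext; simp [eq_comm]
  rw [this, filter_map, card_map]
  rfl

theorem Function.Periodic.count_mul_add {P : ℕ → Prop} [DecidablePred P] {a : ℕ}
    (hP : Function.Periodic P a) (q m : ℕ) :
    Nat.count P (a * q + m) = q * Nat.count P a + Nat.count P m := by
  induction q generalizing m with
  | zero => simp
  | succ q ih =>
    rw [Nat.mul_succ, add_assoc, ih, Nat.count_add]
    simp only [add_comm a, hP _]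
    ring

def IsNonzeroSquareMod (n y : ℕ) : Prop := (y : ZMod n) ≠ 0 ∧ IsSquare (y : ZMod n)

theorem periodic_isNonzeroSquareMod (n : ℕ) : Function.Periodic (IsNonzeroSquareMod n) n := by
  intro y
  simp [IsNonzeroSquareMod]

theorem count_isNonzeroSquareMod_le (n : ℕ) [NeZero n] :
    Nat.count (IsNonzeroSquareMod n) n ≤ n / 2 := by
  -- A square `c * c ≠ 0` is also the square of `|c.valMinAbs| ∈ [1, n / 2]`.
  have hsub :
      (range n).filter (IsNonzeroSquareMod n) ⊆ (Icc 1 (n / 2)).image (· ^ 2 % n) := by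
    intro y hy
    obtain ⟨hyn, hy0, c, hc⟩ := by simpa [IsNonzeroSquareMod] using hy
    refine mem_image.mpr ⟨c.valMinAbs.natAbs, mem_Icc.mpr ⟨?_, ZMod.natAbs_valMinAbs_le c⟩, ?_⟩
    · rw [Nat.one_le_iff_ne_zero, Int.natAbs_ne_zero, Ne, ZMod.valMinAbs_eq_zero]
      rintro rfl
      simp_all
    · rw [← Nat.mod_eq_of_lt hyn, ← ZMod.natCast_eq_natCast_iff']
      push_cast
      rw [← Int.cast_natCast, ← Int.cast_pow, Int.natAbs_sq, Int.cast_pow, ZMod.coe_valMinAbs,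
        sq, hc]
  calc Nat.count (IsNonzeroSquareMod n) n = #((range n).filter (IsNonzeroSquareMod n)) :=
        Nat.count_eq_card_filter_range _ _
    _ ≤ #(Icc 1 (n / 2)) := (card_le_card hsub).trans card_image_le
    _ = n / 2 := by simp

theorem exists_not_isSquare_of_mod_four_eq_three {p : ℕ} [Fact p.Prime] (hmod : p % 4 = 3)
    (h5 : 5 ≤ p) : ∃ t ∈ Icc 1 (p / 2), ¬ IsSquare (t : ZMod p) := by
  by_contra! h
  -- `2 * (p / 2) = p - 1`, a product of two squares, would make `-1` a square.
  have hsq : IsSquare ((2 * (p / 2) : ℕ) : ZMod p) := by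
    push_cast
    exact (h 2 (by simp; omega)).mul (h (p / 2) (by simp; omega))
  rw [show 2 * (p / 2) = p - 1 by omega, Nat.cast_sub (by omega), ZMod.natCast_self,
    Nat.cast_one, zero_sub] at hsq
  exact ZMod.exists_sq_eq_neg_one_iff.mp hsq hmod

theorem count_isNonzeroSquareMod_half_succ_lt {p : ℕ} [Fact p.Prime] (hmod : p % 4 = 3)
    (h5 : 5 ≤ p) : Nat.count (IsNonzeroSquareMod p) (p / 2 + 1) < p / 2 := by
  obtain ⟨t, ht, hts⟩ := exists_not_isSquare_of_mod_four_eq_three hmod h5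
  have hsub : (range (p / 2 + 1)).filter (IsNonzeroSquareMod p) ⊆ (Icc 1 (p / 2)).erase t := by
    intro y hy
    obtain ⟨hy, hy0, hysq⟩ := by simpa [IsNonzeroSquareMod] using hy
    refine mem_erase.mpr ⟨by rintro rfl; exact hts hysq, mem_Icc.mpr ⟨?_, by omega⟩⟩
    rcases y with _ | y
    · simp at hy0
    · omega
  calc Nat.count (IsNonzeroSquareMod p) (p / 2 + 1)
      ≤ #((Icc 1 (p / 2)).erase t) :=
        (Nat.count_eq_card_filter_range _ _).trans_le (card_le_card hsub)
    _ < p / 2 := by rw [card_erase_of_mem ht]; simp; omega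

theorem count_isNonzeroSquareMod_mul_add_half_succ_lt {p : ℕ} [Fact p.Prime] (hmod : p % 4 = 3)
    (h5 : 5 ≤ p) (q : ℕ) :
    Nat.count (IsNonzeroSquareMod p) (p * q + (p / 2 + 1)) < q * (p / 2) + p / 2 := by
  rw [(periodic_isNonzeroSquareMod p).count_mul_add]
  have hblocks := Nat.mul_le_mul_left q (count_isNonzeroSquareMod_le p)
  have hlast := count_isNonzeroSquareMod_half_succ_lt hmod h5
  omega

theorem sq_dvd_of_dvd_of_sq_modEq {p : ℕ} (hp : p.Prime) {k : ℕ} (hk : 2 ≤ k) {x y : ℤ}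
    (h : x ^ 2 ≡ y [ZMOD (p : ℤ) ^ k]) (hy : (p : ℤ) ∣ y) : (p : ℤ) ^ 2 ∣ y := by
  have h2 : x ^ 2 ≡ y [ZMOD (p : ℤ) ^ 2] := h.of_dvd (pow_dvd_pow _ hk)
  have hx : (p : ℤ) ∣ x := (Nat.prime_iff_prime_int.mp hp).dvd_of_dvd_pow
    ((h2.of_dvd (dvd_pow_self _ two_ne_zero)).dvd_iff.mpr hy)
  exact h2.dvd_iff.mp (pow_dvd_pow_of_dvd hx 2)

theorem card_filter_exists_sq_modEq_prime_pow_le {p : ℕ} (hp : p.Prime) {k : ℕ} (hk : 2 ≤ k)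
    (N : ℕ) :
    #((Icc 1 N).filter fun y : ℕ => ∃ x : ℤ, x ^ 2 ≡ y [ZMOD (p : ℤ) ^ k]) ≤
      Nat.count (IsNonzeroSquareMod p) (N + 1) + N / p ^ 2 := by
  rw [Nat.count_eq_card_filter_range, ← Nat.Ioc_filter_dvd_card_eq_div]
  refine (card_le_card fun y hy => ?_).trans (card_union_le _ _)
  obtain ⟨hyN, x, hx⟩ := mem_filter.mp hy
  rw [mem_Icc] at hyN
  by_cases hpy : p ∣ y
  · refine mem_union_right _ (mem_filter.mpr ⟨mem_Ioc.mpr ⟨by omega, hyN.2⟩, ?_⟩)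
    exact_mod_cast sq_dvd_of_dvd_of_sq_modEq hp hk hx (by exact_mod_cast hpy)
  · refine mem_union_left _ (mem_filter.mpr ⟨mem_range.mpr (by omega), ?_, ?_⟩)
    · rwa [Ne, ZMod.natCast_eq_zero_iff]
    · have hxy := (ZMod.intCast_eq_intCast_iff _ _ p).mpr
        (hx.of_dvd (dvd_pow_self (p : ℤ) (by omega)))
      push_cast at hxy
      exact ⟨x, by rw [← hxy, sq]⟩

end

open scoped Classical in
/-- For a prime `p ≡ 3 (mod 4)` with `p ≥ 7` and `k ≥ 2`, the number of quadratic
residues modulo `p^k` (squares that are nonzero mod `p^k`) lying in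
`[1, (p^k - 1)/2]` is strictly less than `(p^k - 1)/4`. -/
theorem four_mul_small_residues_card_pow_lt_of_prime_mod_four_eq_three
    (p : ℕ) (hp : p.Prime) (hmod : p % 4 = 3) (hge : 7 ≤ p) (k : ℕ) (hk : 2 ≤ k) :
    4 * ((Finset.Icc 1 ((p ^ k - 1) / 2)).filter
        (fun y => (∃ x : ℤ, x ^ 2 ≡ (y : ℤ) [ZMOD ((p : ℤ) ^ k)]) ∧
          ¬ ((y : ℤ) ≡ 0 [ZMOD ((p : ℤ) ^ k)]))).card <
      p ^ k - 1 := by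
  have := Fact.mk hp
  obtain ⟨m, rfl⟩ : ∃ m, k = m + 2 := ⟨k - 2, by omega⟩
  obtain ⟨r, hr⟩ : Odd p := hp.odd_of_ne_two (by omega)
  obtain ⟨s, hs⟩ : Odd (p ^ m) := (hp.odd_of_ne_two (by omega)).pow
  have hpow : p ^ (m + 2) = 2 * (p * (p * s + r) + r) + 1 := by
    rw [pow_add, hs]; subst hr; ring
  have hhalf : (p ^ (m + 2) - 1) / 2 = p * (p * s + r) + r := by omega
  have hquot : (p * (p * s + r) + r) / p ^ 2 = s := by
    apply Nat.div_eq_of_lt_le <;> subst hr <;> nlinarith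
  have hcount := count_isNonzeroSquareMod_mul_add_half_succ_lt hmod (by omega) (p * s + r)
  rw [show p / 2 = r by omega, ← add_assoc] at hcount
  have hbound := card_filter_exists_sq_modEq_prime_pow_le hp hk (p * (p * s + r) + r)
  rw [hquot] at hbound
  have hfinal : 4 * ((p * s + r) * r + r + s) ≤ p ^ (m + 2) - 1 := by
    rw [hpow, Nat.add_sub_cancel]; subst hr; nlinarith [Nat.zero_le (r * s)]
  rw [card_filter_bind_pure_natCast, hhalf]
  refine (Nat.mul_le_mul_left 4
    (card_le_card (monotone_filter_right _ fun _ _ h => h.1))).trans_lt ?_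
  omega
end
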